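/- Let k, l ∈ ℕ, let (G,φ) be a J_{16}(k,l)-free ordered graph on n vertices, and let L be a 3-list-assignment of G. Then there exists a family 𝓛 of 3-list-assignments of G such that: (i) |𝓛| ≤ 3(n+1)^{k+l}; (ii) for every L' ∈ 𝓛 and every vertex v, L'(v) ⊆ L(v); (iii) for every L' ∈ 𝓛 there is a 2-element set T ⊆ {1,2,3} such that L'(v) = T for every vertex v with |L'(v)| ≥ 2; and (iv) if c is an L-coloring of G with |c^{-1}(i)| < k+l for some i ∈ {1,2,3}, then c is an L'-coloring for some L' ∈ 𝓛. -/

import Mathlib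

/-- An ordered graph `(G, φ)` is `J₁₆(k, l)`-free: there are no `k + l + 3` distinct
vertices `a 0 < ⋯ < a (k-1) < u 0 < u 1 < u 2 < b 0 < ⋯ < b (l-1)` (with respect to
`φ`) such that `u 0 u 1` and `u 0 u 2` are edges of `G` and no other pair among these
vertices is adjacent. -/
def J16klFree {V : Type*} (G : SimpleGraph V) (φ : V → ℝ) (k l : ℕ) : Prop :=
  ¬ ∃ (a : Fin k → V) (u : Fin 3 → V) (b : Fin l → V),
      (∀ i j : Fin k, i < j → φ (a i) < φ (a j)) ∧
      (∀ i j : Fin 3, i < j → φ (u i) < φ (u j)) ∧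
      (∀ i j : Fin l, i < j → φ (b i) < φ (b j)) ∧
      (∀ (i : Fin k) (j : Fin 3), φ (a i) < φ (u j)) ∧
      (∀ (i : Fin 3) (j : Fin l), φ (u i) < φ (b j)) ∧
      G.Adj (u 0) (u 1) ∧ G.Adj (u 0) (u 2) ∧ ¬ G.Adj (u 1) (u 2) ∧
      (∀ i j : Fin k, ¬ G.Adj (a i) (a j)) ∧
      (∀ i j : Fin l, ¬ G.Adj (b i) (b j)) ∧
      (∀ (i : Fin k) (j : Fin 3), ¬ G.Adj (a i) (u j)) ∧
      (∀ (i : Fin k) (j : Fin l), ¬ G.Adj (a i) (b j)) ∧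
      (∀ (i : Fin 3) (j : Fin l), ¬ G.Adj (u i) (b j))


/-!
Guess a colour `i` and the (small) colour class `S` of `i`: restricting every list to `{i}` on `S`
and to the other two colours off `S` yields a refinement whose lists of size two are all equal to
`{i}ᶜ`, and which every colouring with class `S` for `i` respects. A set of fewer than `k + l`
vertices is the set of values of a map `Fin (k + l) → Option V`, so there are at most
`3 (n + 1) ^ (k + l)` guesses.
-/

open Finset

section restrictToClass

variable {V : Type*} [DecidableEq V] (L : V → Finset (Fin 3)) (i : Fin 3) (S : Finset V) (v : V)

def restrictToClass : Finset (Fin 3) :=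
  (L v).filter fun j => j = i ↔ v ∈ S

theorem mem_restrictToClass {j : Fin 3} :
    j ∈ restrictToClass L i S v ↔ j ∈ L v ∧ (j = i ↔ v ∈ S) :=
  mem_filter

theorem restrictToClass_subset : restrictToClass L i S v ⊆ L v :=
  filter_subset _ _

theorem restrictToClass_subset_singleton (hv : v ∈ S) : restrictToClass L i S v ⊆ {i} :=
  fun _ hj => mem_singleton.2 (((mem_restrictToClass L i S v).1 hj).2.2 hv)

theorem restrictToClass_subset_compl (hv : v ∉ S) : restrictToClass L i S v ⊆ {i}ᶜ :=
  fun _ hj => mem_compl.2 fun hji =>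
    hv (((mem_restrictToClass L i S v).1 hj).2.1 (mem_singleton.1 hji))

theorem restrictToClass_eq_compl_of_two_le_card (h : 2 ≤ (restrictToClass L i S v).card) :
    restrictToClass L i S v = {i}ᶜ := by
  by_cases hv : v ∈ S
  · have := card_le_card (restrictToClass_subset_singleton L i S v hv)
    rw [card_singleton] at this
    omega
  · refine eq_of_subset_of_card_le (restrictToClass_subset_compl L i S v hv) ?_
    rw [card_compl, card_singleton, Fintype.card_fin]
    omega

end restrictToClass

theorem Finset.exists_fun_option_range_eq {V : Type*} {m : ℕ} (S : Finset V)
    (hS : S.card ≤ m) : ∃ f : Fin m → Option V, ∀ v, some v ∈ Set.range f ↔ v ∈ S := by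
  refine ⟨fun j => S.toList[(j : ℕ)]?, fun v => ?_⟩
  rw [← mem_toList, List.mem_iff_getElem?]
  refine ⟨fun ⟨j, hj⟩ => ⟨j, hj⟩, fun ⟨j, hj⟩ => ?_⟩
  obtain ⟨hj_lt, -⟩ := List.getElem?_eq_some_iff.1 hj
  rw [length_toList] at hj_lt
  exact ⟨⟨j, by omega⟩, hj⟩

theorem exists_profile_common_pair_lists
    {V : Type*} [Fintype V] (k l : ℕ) (G : SimpleGraph V)
    (L : V → Finset (Fin 3)) :
    ∃ 𝓛 : Finset (V → Finset (Fin 3)),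
      𝓛.card ≤ 3 * (Fintype.card V + 1) ^ (k + l) ∧
      (∀ L' ∈ 𝓛, ∀ v : V, L' v ⊆ L v) ∧
      (∀ L' ∈ 𝓛, ∃ T : Finset (Fin 3), T.card = 2 ∧
        ∀ v : V, 2 ≤ (L' v).card → L' v = T) ∧
      (∀ c : V → Fin 3, (∀ u v, G.Adj u v → c u ≠ c v) → (∀ v, c v ∈ L v) →
        (∃ i : Fin 3, ({v : V | c v = i} : Set V).ncard < k + l) →
        ∃ L' ∈ 𝓛, ∀ v, c v ∈ L' v) := by
  classical
  let guess (p : Fin 3 × (Fin (k + l) → Option V)) : V → Finset (Fin 3) :=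
    restrictToClass L p.1 (univ.filter fun v => some v ∈ Set.range p.2)
  refine ⟨univ.image guess, card_image_le.trans (by simp), ?_, ?_, ?_⟩
  · simp only [mem_image, mem_univ, true_and, forall_exists_index, forall_apply_eq_imp_iff]
    exact fun p => restrictToClass_subset L _ _
  · simp only [mem_image, mem_univ, true_and, forall_exists_index, forall_apply_eq_imp_iff]
    refine fun p => ⟨{p.1}ᶜ, by simp [card_compl], ?_⟩
    exact restrictToClass_eq_compl_of_two_le_card L _ _
  · rintro c - hcL ⟨i, hi⟩
    have hclass : (univ.filter (c · = i)).card < k + l := by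
      rw [← Set.ncard_coe_finset]; simpa using hi
    obtain ⟨f, hf⟩ := exists_fun_option_range_eq _ hclass.le
    refine ⟨guess (i, f), mem_image_of_mem _ (mem_univ _), fun v => ?_⟩
    exact (mem_restrictToClass _ _ _ _).2
      ⟨hcL v, by simp only [mem_filter, mem_univ, true_and, hf]⟩
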